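/- arXiv:1502.03286 — 2 statements merged into one kernel-verified Lean document; each statement's English description precedes it below -/
import Mathlib

section
/- Sum-exponential bound: for any η > 0, if m_0 = 1 then log n(ε, APP_s) ≤ 2η·log ε^{-1} + C_η · Σ_{j=1}^s ω^{η a_j}, where C_η = m_max · Σ_{k=1}^∞ ω^{η a_1 (k^{b_0} - 1)} < ∞ with b_0 = inf_j b_j > 0. Consequently, if lim_j a_j = ∞ then EC-weak tractability holds: lim_{s+ε^{-1}→∞} (log n(ε, APP_s))/(s + log ε^{-1}) = 0. -/
/-!
Rankin's trick: for `η > 0` the indicator of `∑ a_j k_j^{b_j} < x(ε)` is at most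
`ω^{η (∑ a_j k_j^{b_j} - x(ε))}`, and `ω^{-η x(ε)} = ε^{-2η}`. Hence `n(ε, APP_s)` is at most
`ε^{-2η}` times a product over `j` of one-dimensional series `∑_k m_k ω^{η a_j k^{b_j}}`. Since
`a_j k^{b_j} ≥ a_j + a_1 (k^{b₀} - 1)` for `k ≥ 1`, the `j`-th series is at most
`1 + C_η ω^{η a_j} ≤ exp (C_η ω^{η a_j})`, and taking logarithms gives the bound.
If `a_j → ∞`, choose `η = δ / 4`: the weights `C_η ω^{η a_j}` tend to zero, so their partial sums
are `o(s)`, and the bound becomes `δ / 2 · (s + log ε⁻¹) + O(1)`.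
-/

open scoped ENNReal

/-- `x(ε) = log ε⁻² / log ω⁻¹`. -/
noncomputable def X (ω ε : ℝ) : ℝ := Real.log (ε⁻¹ ^ 2) / Real.log ω⁻¹

open Classical in
/-- The information complexity `n(ε, APP_s)`: the weighted count
`∑_{k ∈ ℕ₀^s, ∑_j a_j k_j^{b_j} < x(ε)} m_{k_1} ⋯ m_{k_s}` (valued in `ℝ≥0∞`). -/
noncomputable def nInfo (ω : ℝ) (a b : ℕ → ℝ) (m : ℕ → ℕ) (s : ℕ) (ε : ℝ) : ℝ≥0∞ :=
  ∑' k : Fin s → ℕ,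
    if (∑ j : Fin s, a j * ((k j : ℝ) ^ (b j))) < X ω ε then
      ∏ j : Fin s, (m (k j) : ℝ≥0∞) else 0

open Filter Topology

theorem ENNReal.tsum_pi_prod_eq_prod_tsum {β : Type*} :
    ∀ {s : ℕ} (g : Fin s → β → ℝ≥0∞), ∑' k : Fin s → β, ∏ j, g j (k j) = ∏ j, ∑' n, g j n
  | 0, g => by simp
  | s + 1, g => by
    rw [← (Fin.consEquiv fun _ ↦ β).tsum_eq, ENNReal.tsum_prod', Fin.prod_univ_succ,
      ← ENNReal.tsum_pi_prod_eq_prod_tsum, ← ENNReal.tsum_mul_right]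
    refine tsum_congr fun n ↦ ?_
    rw [← ENNReal.tsum_mul_left]
    refine tsum_congr fun k ↦ ?_
    simp [Fin.consEquiv, Fin.prod_univ_succ]

theorem summable_rpow_mul_rpow {ω c p : ℝ} (hω : ω ∈ Set.Ioo 0 1) (hc : 0 < c) (hp : 0 < p) :
    Summable fun k : ℕ ↦ ω ^ (c * ((k : ℝ) + 1) ^ p) := by
  have hrate : 0 < c * Real.log ω⁻¹ := mul_pos hc (Real.log_pos (one_lt_inv₀ hω.1 |>.2 hω.2))
  have hbase : Tendsto (fun k : ℕ ↦ ((k : ℝ) + 1) ^ p) atTop atTop :=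
    (tendsto_rpow_atTop hp).comp (tendsto_atTop_add_const_right _ 1 tendsto_natCast_atTop_atTop)
  -- `ω^{c y} = exp (-c log ω⁻¹ · y)` is `o(y^{-2/p})`; at `y = (k + 1)^p` this is `o((k + 1)⁻²)`.
  have hexp := (isLittleO_exp_neg_mul_rpow_atTop hrate (-(2 / p))).comp_tendsto hbase
  have hsum : Summable fun k : ℕ ↦ (((k : ℝ) + 1) ^ p) ^ (-(2 / p)) := by
    refine ((summable_nat_add_iff 1).2
      (Real.summable_nat_rpow.2 (by norm_num : (-2 : ℝ) < -1))).congr fun k ↦ ?_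
    rw [← Real.rpow_mul (by positivity), mul_neg, mul_div_cancel₀ _ hp.ne']
    push_cast
    ring_nf
  refine summable_of_isBigO_nat hsum (hexp.isBigO.congr_left fun k ↦ ?_)
  simp only [Function.comp_apply, Real.rpow_def_of_pos hω.1, Real.log_inv]
  ring_nf

theorem summable_rpow_mul_rpow_sub_one {ω c p : ℝ} (hω : ω ∈ Set.Ioo 0 1) (hc : 0 < c)
    (hp : 0 < p) : Summable fun k : ℕ ↦ ω ^ (c * (((k : ℝ) + 1) ^ p - 1)) :=
  ((summable_rpow_mul_rpow hω hc hp).mul_left (ω ^ (-c))).congr fun k ↦ by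
    rw [← Real.rpow_add hω.1]; ring_nf

theorem mul_rpow_sub_one_le_mul_rpow_sub_one {x c₀ c p q : ℝ} (hx : 1 ≤ x) (hc₀ : 0 ≤ c₀)
    (hc : c₀ ≤ c) (hp : 0 ≤ p) (hpq : p ≤ q) : c₀ * (x ^ p - 1) ≤ c * (x ^ q - 1) :=
  mul_le_mul hc (sub_le_sub_right (Real.rpow_le_rpow_of_exponent_le hx hpq) 1)
    (sub_nonneg.2 (Real.one_le_rpow hx hp)) (hc₀.trans hc)

theorem X_mul_log_inv {ω : ℝ} (hω : ω ∈ Set.Ioo 0 1) (ε : ℝ) :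
    X ω ε * Real.log ω⁻¹ = 2 * Real.log ε⁻¹ := by
  rw [X, div_mul_cancel₀ _ (Real.log_pos (one_lt_inv₀ hω.1 |>.2 hω.2)).ne', Real.log_pow]
  norm_num

theorem log_toReal_le_of_le_ofReal_exp {x : ℝ≥0∞} {R : ℝ} (hR : 0 ≤ R)
    (hx : x ≤ ENNReal.ofReal (Real.exp R)) : Real.log x.toReal ≤ R := by
  rcases x.toReal_nonneg.eq_or_lt with h | h
  · rwa [← h, Real.log_zero]
  · exact (Real.log_le_iff_le_exp h).2 (ENNReal.toReal_le_of_le_ofReal (Real.exp_pos R).le hx)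

theorem one_le_exp_mul_rpow_of_lt_X {ω ε η D : ℝ} (hω : ω ∈ Set.Ioo 0 1) (hη : 0 ≤ η)
    (hD : D < X ω ε) : 1 ≤ Real.exp (2 * η * Real.log ε⁻¹) * ω ^ (η * D) := by
  have hX := X_mul_log_inv hω ε
  rw [Real.log_inv] at hX
  have := mul_nonneg hη
    (mul_nonneg_of_nonpos_of_nonpos (Real.log_neg hω.1 hω.2).le (sub_nonpos.2 hD.le))
  rw [Real.rpow_def_of_pos hω.1, ← Real.exp_add]
  exact Real.one_le_exp (by nlinarith)

theorem prod_natCast_le_exp_mul_prod {ω ε η : ℝ} (hω : ω ∈ Set.Ioo 0 1) (hη : 0 ≤ η)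
    (a b : ℕ → ℝ) (m : ℕ → ℕ) {s : ℕ} {k : Fin s → ℕ}
    (hk : ∑ j : Fin s, a j * (k j : ℝ) ^ b j < X ω ε) :
    ∏ j : Fin s, (m (k j) : ℝ≥0∞) ≤ ENNReal.ofReal (Real.exp (2 * η * Real.log ε⁻¹)) *
      ∏ j : Fin s, (m (k j) : ℝ≥0∞) * ENNReal.ofReal (ω ^ (η * a j * (k j : ℝ) ^ b j)) := by
  have hsum : ∑ j : Fin s, η * a j * (k j : ℝ) ^ b j = η * ∑ j : Fin s, a j * (k j : ℝ) ^ b j := by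
    simp only [Finset.mul_sum, mul_assoc]
  rw [Finset.prod_mul_distrib, mul_left_comm,
    ← ENNReal.ofReal_prod_of_nonneg fun j _ ↦ Real.rpow_nonneg hω.1.le _,
    ← Real.rpow_sum_of_pos hω.1, hsum, ← ENNReal.ofReal_mul (Real.exp_pos _).le]
  exact le_mul_of_one_le_right' (ENNReal.one_le_ofReal.2 (one_le_exp_mul_rpow_of_lt_X hω hη hk))

theorem nInfo_le_exp_mul_prod_tsum {ω η : ℝ} (hω : ω ∈ Set.Ioo 0 1) (hη : 0 ≤ η)
    (a b : ℕ → ℝ) (m : ℕ → ℕ) (s : ℕ) (ε : ℝ) :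
    nInfo ω a b m s ε ≤ ENNReal.ofReal (Real.exp (2 * η * Real.log ε⁻¹)) *
      ∏ j : Fin s, ∑' n : ℕ, (m n : ℝ≥0∞) * ENNReal.ofReal (ω ^ (η * a j * (n : ℝ) ^ b j)) := by
  rw [← ENNReal.tsum_pi_prod_eq_prod_tsum, ← ENNReal.tsum_mul_left]
  refine ENNReal.tsum_le_tsum fun k ↦ ?_
  split_ifs with hk
  · exact prod_natCast_le_exp_mul_prod hω hη a b m hk
  · exact zero_le

theorem tsum_natCast_mul_ofReal_rpow_le {ω c₀ c p q : ℝ} (hω : ω ∈ Set.Ioo 0 1) {m : ℕ → ℕ}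
    {M : ℕ} (hm0 : m 0 = 1) (hmM : ∀ k, m k ≤ M) (hc₀ : 0 < c₀) (hc : c₀ ≤ c) (hp : 0 < p)
    (hpq : p ≤ q) :
    ∑' n : ℕ, (m n : ℝ≥0∞) * ENNReal.ofReal (ω ^ (c * (n : ℝ) ^ q)) ≤
      ENNReal.ofReal (Real.exp ((M * ∑' k : ℕ, ω ^ (c₀ * (((k : ℝ) + 1) ^ p - 1))) * ω ^ c)) := by
  set S := ∑' k : ℕ, ω ^ (c₀ * (((k : ℝ) + 1) ^ p - 1))
  have hω₀ := hω.1
  have hS := summable_rpow_mul_rpow_sub_one hω hc₀ hp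
  have hterm (k : ℕ) : (m (k + 1) : ℝ≥0∞) * ENNReal.ofReal (ω ^ (c * ((k + 1 : ℕ) : ℝ) ^ q)) ≤
      ENNReal.ofReal (M * ω ^ c * ω ^ (c₀ * (((k : ℝ) + 1) ^ p - 1))) := by
    have hexponent := mul_rpow_sub_one_le_mul_rpow_sub_one (x := (k : ℝ) + 1) (by simp) hc₀.le
      hc hp.le hpq
    rw [mul_assoc, ENNReal.ofReal_mul (Nat.cast_nonneg _), ENNReal.ofReal_natCast,
      ← Real.rpow_add hω.1]
    exact mul_le_mul' (by exact_mod_cast hmM _) (ENNReal.ofReal_le_ofReal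
      (Real.rpow_le_rpow_of_exponent_ge hω.1 hω.2.le (by push_cast; linarith)))
  calc ∑' n : ℕ, (m n : ℝ≥0∞) * ENNReal.ofReal (ω ^ (c * (n : ℝ) ^ q))
      ≤ 1 + ∑' k : ℕ, ENNReal.ofReal (M * ω ^ c * ω ^ (c₀ * (((k : ℝ) + 1) ^ p - 1))) := by
        rw [tsum_eq_zero_add' ENNReal.summable]
        simp only [hm0, Nat.cast_zero, Real.zero_rpow (hp.trans_le hpq).ne', mul_zero,
          Real.rpow_zero, ENNReal.ofReal_one, Nat.cast_one, mul_one]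
        gcongr with k
        exact hterm k
    _ = ENNReal.ofReal (1 + M * ω ^ c * S) := by
        rw [← ENNReal.ofReal_tsum_of_nonneg (fun k ↦ by positivity) (hS.mul_left _),
          tsum_mul_left, ENNReal.ofReal_add zero_le_one (by positivity), ENNReal.ofReal_one]
    _ ≤ _ := ENNReal.ofReal_le_ofReal (by linarith [Real.add_one_le_exp ((M * S) * ω ^ c)])

theorem nInfo_le_ofReal_exp {ω η b₀ : ℝ} (hω : ω ∈ Set.Ioo 0 1) {a b : ℕ → ℝ}
    (ha₀ : 0 < a 0) (hamono : Monotone a) (hb₀ : 0 < b₀) (hb : ∀ j, b₀ ≤ b j)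
    {m : ℕ → ℕ} {mmax : ℕ} (hmmax : ∀ k, m k ≤ mmax) (hm0 : m 0 = 1) (hη : 0 < η)
    (s : ℕ) (ε : ℝ) :
    nInfo ω a b m s ε ≤ ENNReal.ofReal (Real.exp (2 * η * Real.log ε⁻¹ +
      ((mmax : ℝ) * ∑' k : ℕ, ω ^ (η * a 0 * (((k : ℝ) + 1) ^ b₀ - 1))) *
        ∑ j ∈ Finset.range s, ω ^ (η * a j))) := by
  set C := (mmax : ℝ) * ∑' k : ℕ, ω ^ (η * a 0 * (((k : ℝ) + 1) ^ b₀ - 1))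
  calc nInfo ω a b m s ε
      ≤ ENNReal.ofReal (Real.exp (2 * η * Real.log ε⁻¹)) *
          ∏ j : Fin s, ∑' n : ℕ, (m n : ℝ≥0∞) * ENNReal.ofReal (ω ^ (η * a j * (n : ℝ) ^ b j)) :=
        nInfo_le_exp_mul_prod_tsum hω hη.le a b m s ε
    _ ≤ ENNReal.ofReal (Real.exp (2 * η * Real.log ε⁻¹)) *
          ∏ j : Fin s, ENNReal.ofReal (Real.exp (C * ω ^ (η * a j))) := by
        gcongr with j
        exact tsum_natCast_mul_ofReal_rpow_le hω hm0 hmmax (mul_pos hη ha₀)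
          (mul_le_mul_of_nonneg_left (hamono (Nat.zero_le j)) hη.le) hb₀ (hb j)
    _ = _ := by
        rw [← ENNReal.ofReal_prod_of_nonneg fun _ _ ↦ (Real.exp_pos _).le, ← Real.exp_sum,
          ← ENNReal.ofReal_mul (Real.exp_pos _).le, ← Real.exp_add, ← Finset.mul_sum,
          Fin.sum_univ_eq_sum_range (fun j ↦ ω ^ (η * a j))]

theorem log_nInfo_le {ω η b₀ : ℝ} (hω : ω ∈ Set.Ioo 0 1) {a b : ℕ → ℝ}
    (ha₀ : 0 < a 0) (hamono : Monotone a) (hb₀ : 0 < b₀) (hb : ∀ j, b₀ ≤ b j)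
    {m : ℕ → ℕ} {mmax : ℕ} (hmmax : ∀ k, m k ≤ mmax) (hm0 : m 0 = 1) (hη : 0 < η)
    (s : ℕ) {ε : ℝ} (hε : ε ∈ Set.Ioo 0 1) :
    Real.log ((nInfo ω a b m s ε).toReal) ≤ 2 * η * Real.log ε⁻¹ +
      ((mmax : ℝ) * ∑' k : ℕ, ω ^ (η * a 0 * (((k : ℝ) + 1) ^ b₀ - 1))) *
        ∑ j ∈ Finset.range s, ω ^ (η * a j) := by
  have hω₀ := hω.1
  have hlogε : 0 ≤ Real.log ε⁻¹ := Real.log_nonneg (one_le_inv₀ hε.1 |>.2 hε.2.le)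
  exact log_toReal_le_of_le_ofReal_exp (by positivity)
    (nInfo_le_ofReal_exp hω ha₀ hamono hb₀ hb hmmax hm0 hη s ε)

theorem exists_sum_range_le_mul_add_of_tendsto_zero {t : ℕ → ℝ} (ht : Tendsto t atTop (𝓝 0))
    {δ : ℝ} (hδ : 0 < δ) : ∃ K, ∀ s, ∑ j ∈ Finset.range s, t j ≤ δ * s + K := by
  obtain ⟨N, hN⟩ := eventually_atTop.1 (ht.eventually_le_const hδ)
  set excess := fun j ↦ max (t j - δ) 0
  refine ⟨∑ j ∈ Finset.range N, excess j, fun s ↦ ?_⟩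
  have hexcess : ∑ j ∈ Finset.range s, excess j ≤ ∑ j ∈ Finset.range N, excess j := by
    calc ∑ j ∈ Finset.range s, excess j ≤ ∑ j ∈ Finset.range (max s N), excess j :=
          Finset.sum_le_sum_of_subset_of_nonneg (by simp) fun _ _ _ ↦ le_max_right _ _
      _ = ∑ j ∈ Finset.range N, excess j := by
          refine (Finset.sum_subset (by simp) fun j _ hj ↦ ?_).symm
          simpa [excess] using hN j (by simpa using hj)
  calc ∑ j ∈ Finset.range s, t j ≤ ∑ j ∈ Finset.range s, (δ + excess j) :=
        Finset.sum_le_sum fun j _ ↦ by linarith [le_max_left (t j - δ) 0]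
    _ ≤ δ * s + ∑ j ∈ Finset.range N, excess j := by
        rw [Finset.sum_add_distrib, Finset.sum_const, Finset.card_range, nsmul_eq_mul, mul_comm]
        linarith

theorem le_add_log_of_add_exp_le {M s x : ℝ} (hs : 0 ≤ s) (hx : 1 ≤ x)
    (h : M + Real.exp M ≤ s + x) : M ≤ s + Real.log x := by
  rcases le_or_gt M s with hMs | hsM
  · linarith [Real.log_nonneg hx]
  · linarith [(Real.le_log_iff_exp_le (zero_lt_one.trans_le hx)).2 (by linarith)]

theorem exists_forall_div_lt_of_le_mul_add {f : ℕ → ℝ → ℝ} {δ K : ℝ} (hδ : 0 < δ)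
    (hf : ∀ s : ℕ, ∀ ε ∈ Set.Ioo (0 : ℝ) 1, f s ε ≤ δ / 2 * (s + Real.log ε⁻¹) + K) :
    ∃ T : ℝ, ∀ s : ℕ, ∀ ε ∈ Set.Ioo (0 : ℝ) 1,
      T ≤ s + ε⁻¹ → f s ε / (s + Real.log ε⁻¹) < δ := by
  set M := 2 * |K| / δ + 1
  refine ⟨M + Real.exp M, fun s ε hε hT ↦ ?_⟩
  have hε₁ : 1 < ε⁻¹ := one_lt_inv₀ hε.1 |>.2 hε.2
  have hM : M ≤ s + Real.log ε⁻¹ := le_add_log_of_add_exp_le (Nat.cast_nonneg s) hε₁.le hT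
  have hK : K < δ / 2 * M := by
    have : δ / 2 * M = |K| + δ / 2 := by simp only [M]; field_simp
    linarith [le_abs_self K]
  rw [div_lt_iff₀ (by linarith [Real.log_pos hε₁, Nat.cast_nonneg (α := ℝ) s])]
  nlinarith [hf s ε hε]

theorem stmt17_general (ω : ℝ) (hω : ω ∈ Set.Ioo (0:ℝ) 1)
    (a b : ℕ → ℝ) (ha : ∀ j, 0 < a j) (hamono : Monotone a)
    (b₀ : ℝ) (hb₀ : 0 < b₀) (hb : ∀ j, b₀ ≤ b j)
    (m : ℕ → ℕ) (mmax : ℕ) (hmmax : ∀ k, m k ≤ mmax)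
    (hm0 : m 0 = 1) (η : ℝ) (hη : 0 < η) :
    Summable (fun k : ℕ => ω ^ (η * a 0 * (((k : ℝ) + 1) ^ b₀ - 1))) ∧
    (∀ s : ℕ, 1 ≤ s → ∀ ε ∈ Set.Ioo (0:ℝ) 1,
      Real.log ((nInfo ω a b m s ε).toReal)
        ≤ 2 * η * Real.log ε⁻¹ +
          ((mmax : ℝ) * ∑' k : ℕ, ω ^ (η * a 0 * (((k : ℝ) + 1) ^ b₀ - 1))) *
            ∑ j ∈ Finset.range s, ω ^ (η * a j)) ∧
    (Filter.Tendsto a Filter.atTop Filter.atTop →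
      ∀ δ : ℝ, 0 < δ → ∃ T : ℝ, ∀ s : ℕ, 1 ≤ s → ∀ ε ∈ Set.Ioo (0:ℝ) 1,
        T ≤ (s : ℝ) + ε⁻¹ →
          Real.log ((nInfo ω a b m s ε).toReal) / ((s : ℝ) + Real.log ε⁻¹) < δ) := by
  refine ⟨summable_rpow_mul_rpow_sub_one hω (mul_pos hη (ha 0)) hb₀,
    fun s _ ε hε ↦ log_nInfo_le hω (ha 0) hamono hb₀ hb hmmax hm0 hη s hε, fun ha_top δ hδ ↦ ?_⟩
  set C := (mmax : ℝ) * ∑' k : ℕ, ω ^ (δ / 4 * a 0 * (((k : ℝ) + 1) ^ b₀ - 1))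
  have hweights : Tendsto (fun j ↦ C * ω ^ (δ / 4 * a j)) atTop (𝓝 0) := by
    simpa using ((tendsto_rpow_atTop_of_base_lt_one ω (by linarith [hω.1]) hω.2).comp
      (ha_top.const_mul_atTop (by positivity))).const_mul C
  obtain ⟨K, hK⟩ := exists_sum_range_le_mul_add_of_tendsto_zero hweights (half_pos hδ)
  obtain ⟨T, hT⟩ := exists_forall_div_lt_of_le_mul_add
    (f := fun s ε ↦ Real.log (nInfo ω a b m s ε).toReal) (K := K) hδ fun s ε hε ↦ by
    have hlog := log_nInfo_le hω (ha 0) hamono hb₀ hb hmmax hm0 (by positivity : 0 < δ / 4) s hε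
    rw [Finset.mul_sum] at hlog
    linarith [hK s]
  exact ⟨T, fun s _ ↦ hT s⟩

/-- Sum-exponential bound: if `m_0 = 1` then for any `η > 0`,
`log n(ε,APP_s) ≤ 2η log ε⁻¹ + C_η ∑_{j=1}^s ω^{η a_j}` with
`C_η = m_max ∑_{k≥1} ω^{η a_1 (k^{b₀}-1)} < ∞`; consequently, if `a_j → ∞`
then EC-weak tractability holds. -/
theorem stmt17 (ω : ℝ) (hω : ω ∈ Set.Ioo (0:ℝ) 1)
    (a b : ℕ → ℝ) (ha : ∀ j, 0 < a j) (hamono : Monotone a)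
    (b₀ : ℝ) (hb₀ : 0 < b₀) (hb : ∀ j, b₀ ≤ b j)
    (m : ℕ → ℕ) (hm : ∀ k, 1 ≤ m k) (mmax : ℕ) (hmmax : ∀ k, m k ≤ mmax)
    (hm0 : m 0 = 1) (η : ℝ) (hη : 0 < η) :
    Summable (fun k : ℕ => ω ^ (η * a 0 * (((k : ℝ) + 1) ^ b₀ - 1))) ∧
    (∀ s : ℕ, 1 ≤ s → ∀ ε ∈ Set.Ioo (0:ℝ) 1,
      Real.log ((nInfo ω a b m s ε).toReal)
        ≤ 2 * η * Real.log ε⁻¹ +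
          ((mmax : ℝ) * ∑' k : ℕ, ω ^ (η * a 0 * (((k : ℝ) + 1) ^ b₀ - 1))) *
            ∑ j ∈ Finset.range s, ω ^ (η * a j)) ∧
    (Filter.Tendsto a Filter.atTop Filter.atTop →
      ∀ δ : ℝ, 0 < δ → ∃ T : ℝ, ∀ s : ℕ, 1 ≤ s → ∀ ε ∈ Set.Ioo (0:ℝ) 1,
        T ≤ (s : ℝ) + ε⁻¹ →
          Real.log ((nInfo ω a b m s ε).toReal) / ((s : ℝ) + Real.log ε⁻¹) < δ) :=
  stmt17_general ω hω a b ha hamono b₀ hb₀ hb m mmax hmmax hm0 η hη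
end

section
/- Strong polynomial tractability criterion: assume m_0 = 1 and that α = lim_{j→∞} a_j/log j exists and is positive. Then for any τ > 1/(α log ω^{-1}), sup_s Σ_{k=1}^∞ λ_{s,k}^τ < ∞; conversely if α = 0 then for every τ > 0 and q ≥ 0, sup_s (Σ_{k=1}^∞ λ_{s,k}^τ)^{1/τ} s^{-q} = ∞. -/
/-!
The sum factorises as `∏_{j<s} Z_j` with `Z_j = ∑_n m_n ω^{τ a_j n^{b_j}}`, and with
`r_j = ω^{τ a_j}` every factor satisfies `1 + r_j ≤ Z_j ≤ 1 + C r_j`, where `C` does not depend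
on `j` (it only uses `a_j ≥ a_0` and `b_j ≥ b₀`). Since `r_j = j^{-τ (a_j / log j) log ω⁻¹}`:
if `τ α log ω⁻¹ > 1` then `r_j ≤ j^{-θ}` for some `θ > 1`, so `∏ (1 + C r_j) ≤ exp (C ∑ r_j)`
is bounded in `s`; if `α = 0` then `r_j ≥ j^{-1/2}` eventually, and since `r` is antitone the
product over `j ≤ s` is at least `(1 + r_s)^{s+1} ≥ exp (√(s+1) / 2)`, which beats every power
of `s`.
-/

open scoped ENNReal

/-- `∑_k λ_{s,k}^τ = ∑_{k ∈ ℕ₀^s} ∏_j m_{k_j} ω^{τ a_j k_j^{b_j}}` (in `ℝ≥0∞`). -/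
noncomputable def zetaSum (ω : ℝ) (a b : ℕ → ℝ) (m : ℕ → ℕ) (τ : ℝ) (s : ℕ) : ℝ≥0∞ :=
  ∑' k : Fin s → ℕ,
    ∏ j : Fin s, ((m (k j) : ℝ≥0∞) * ENNReal.ofReal (ω ^ (τ * a j * ((k j : ℝ) ^ (b j)))))

open Filter Real

lemma log_inv_pos_of_mem_Ioo {ω : ℝ} (hω : ω ∈ Set.Ioo 0 1) : 0 < log ω⁻¹ := by
  rw [log_inv]
  exact neg_pos.2 (log_neg hω.1 hω.2)

lemma eventually_const_mul_log_le_mul_rpow (c : ℝ) {ε β : ℝ} (hε : 0 < ε) (hβ : 0 < β) :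
    ∀ᶠ x : ℝ in atTop, c * log x ≤ ε * x ^ β := by
  filter_upwards [((isLittleO_log_rpow_atTop hβ).const_mul_left c).def hε,
    eventually_ge_atTop 0] with x hx hx0
  rw [norm_of_nonneg (rpow_nonneg hx0 β)] at hx
  exact (le_norm_self _).trans hx

lemma eventually_mul_log_lt_of_tendsto_div_log {a : ℕ → ℝ} {α θ : ℝ}
    (hα : Tendsto (fun j : ℕ => a j / log j) atTop (nhds α)) (hθ : θ < α) :
    ∀ᶠ j : ℕ in atTop, θ * log j < a j := by
  filter_upwards [hα.eventually (eventually_gt_nhds hθ), eventually_ge_atTop 2] with j hj hj2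
  exact (lt_div_iff₀ (log_pos (by exact_mod_cast hj2))).1 hj

lemma eventually_lt_mul_log_of_tendsto_div_log {a : ℕ → ℝ} {α θ : ℝ}
    (hα : Tendsto (fun j : ℕ => a j / log j) atTop (nhds α)) (hθ : α < θ) :
    ∀ᶠ j : ℕ in atTop, a j < θ * log j := by
  filter_upwards [hα.eventually (eventually_lt_nhds hθ), eventually_ge_atTop 2] with j hj hj2
  exact (div_lt_iff₀ (log_pos (by exact_mod_cast hj2))).1 hj

lemma rpow_le_rpow_neg_of_mul_log_le {ω x y θ : ℝ} (hω : 0 < ω) (hx : 0 < x)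
    (h : θ * log x ≤ y * log ω⁻¹) : ω ^ y ≤ x ^ (-θ) := by
  rw [rpow_def_of_pos hω, rpow_def_of_pos hx, exp_le_exp]
  rw [log_inv] at h
  linarith

lemma rpow_neg_le_rpow_of_mul_log_le {ω x y θ : ℝ} (hω : 0 < ω) (hx : 0 < x)
    (h : y * log ω⁻¹ ≤ θ * log x) : x ^ (-θ) ≤ ω ^ y := by
  rw [rpow_def_of_pos hω, rpow_def_of_pos hx, exp_le_exp]
  rw [log_inv] at h
  linarith

lemma summable_rpow_mul_natCast_rpow {ω c β : ℝ} (hω : ω ∈ Set.Ioo 0 1) (hc : 0 < c)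
    (hβ : 0 < β) : Summable fun n : ℕ => ω ^ (c * (n : ℝ) ^ β) := by
  have hL : 0 < log ω⁻¹ := log_inv_pos_of_mem_Ioo hω
  refine .of_norm_bounded_eventually_nat (g := fun n : ℕ => (n : ℝ) ^ (-2 : ℝ))
    (summable_nat_rpow.2 (by norm_num)) ?_
  filter_upwards [tendsto_natCast_atTop_atTop.eventually
      (eventually_const_mul_log_le_mul_rpow 2 (mul_pos hc hL) hβ),
    eventually_ge_atTop 1] with n hn hn1
  rw [norm_of_nonneg (rpow_nonneg hω.1.le _)]
  exact rpow_le_rpow_neg_of_mul_log_le hω.1 (by exact_mod_cast hn1) (by linarith)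

lemma ENNReal.tsum_fin_pi_prod {β : Type*} :
    ∀ (s : ℕ) (g : Fin s → β → ℝ≥0∞),
      ∑' k : Fin s → β, ∏ j, g j (k j) = ∏ j, ∑' n, g j n
  | 0, g => by simp
  | s + 1, g => by
    rw [← (Fin.consEquiv fun _ => β).tsum_eq, ENNReal.tsum_prod']
    simp only [Fin.consEquiv, Equiv.coe_fn_mk, Fin.prod_univ_succ, Fin.cons_zero, Fin.cons_succ,
      ENNReal.tsum_mul_left, ENNReal.tsum_mul_right, ENNReal.tsum_fin_pi_prod s]

lemma prod_one_add_ofReal_le_exp_tsum {x : ℕ → ℝ} (hx : ∀ j, 0 ≤ x j) (hs : Summable x)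
    (s : ℕ) : ∏ j : Fin s, (1 + ENNReal.ofReal (x j)) ≤ ENNReal.ofReal (exp (∑' j, x j)) := by
  calc ∏ j : Fin s, (1 + ENNReal.ofReal (x j))
      = ENNReal.ofReal (∏ j ∈ Finset.range s, (1 + x j)) := by
        rw [ENNReal.ofReal_prod_of_nonneg fun j _ => by linarith [hx j],
          ← Fin.prod_univ_eq_prod_range]
        simp [ENNReal.ofReal_add zero_le_one (hx _)]
    _ ≤ ENNReal.ofReal (exp (∑' j, x j)) := by
        gcongr
        exact (prod_one_add_le_exp_sum _ hx).trans
          (exp_le_exp.2 (hs.sum_le_tsum _ fun j _ => hx j))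

noncomputable def zetaFactor (ω : ℝ) (m : ℕ → ℕ) (c β : ℝ) : ℝ≥0∞ :=
  ∑' n : ℕ, (m n : ℝ≥0∞) * ENNReal.ofReal (ω ^ (c * (n : ℝ) ^ β))

lemma zetaSum_eq_prod_zetaFactor (ω : ℝ) (a b : ℕ → ℝ) (m : ℕ → ℕ) (τ : ℝ) (s : ℕ) :
    zetaSum ω a b m τ s = ∏ j : Fin s, zetaFactor ω m (τ * a j) (b j) :=
  ENNReal.tsum_fin_pi_prod s fun j n =>
    (m n : ℝ≥0∞) * ENNReal.ofReal (ω ^ (τ * a j * (n : ℝ) ^ b j))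

lemma zetaFactor_eq_one_add {ω c β : ℝ} {m : ℕ → ℕ} (hβ : β ≠ 0) (hm0 : m 0 = 1) :
    zetaFactor ω m c β =
      1 + ∑' n : ℕ, (m (n + 1) : ℝ≥0∞) * ENNReal.ofReal (ω ^ (c * ((n + 1 : ℕ) : ℝ) ^ β)) := by
  rw [zetaFactor, tsum_eq_zero_add' ENNReal.summable]
  simp [hm0, zero_rpow hβ]

lemma one_add_le_zetaFactor {ω c β : ℝ} {m : ℕ → ℕ} (hβ : β ≠ 0) (hm0 : m 0 = 1)
    (hm1 : 1 ≤ m 1) : 1 + ENNReal.ofReal (ω ^ c) ≤ zetaFactor ω m c β := by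
  rw [zetaFactor_eq_one_add hβ hm0]
  gcongr
  refine le_trans ?_ (ENNReal.le_tsum 0)
  simpa using le_mul_of_one_le_left' (Nat.one_le_cast.2 hm1)

lemma zetaFactor_le {ω c β c₀ β₀ : ℝ} {m : ℕ → ℕ} {M : ℕ} (hω : ω ∈ Set.Ioo 0 1)
    (hc₀ : 0 < c₀) (hc : c₀ ≤ c) (hβ₀ : 0 < β₀) (hβ : β₀ ≤ β) (hM : ∀ k, m k ≤ M)
    (hm0 : m 0 = 1) :
    zetaFactor ω m c β ≤
      1 + ENNReal.ofReal (M * ω ^ (c - c₀) * ∑' n : ℕ, ω ^ (c₀ * (n : ℝ) ^ β₀)) := by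
  set g : ℕ → ℝ := fun n => M * ω ^ (c - c₀) * ω ^ (c₀ * (n : ℝ) ^ β₀)
  have hg0 : ∀ n, 0 ≤ g n := fun n =>
    mul_nonneg (mul_nonneg M.cast_nonneg (rpow_nonneg hω.1.le _)) (rpow_nonneg hω.1.le _)
  have hterm (n : ℕ) : (m (n + 1) : ℝ≥0∞) * ENNReal.ofReal (ω ^ (c * ((n + 1 : ℕ) : ℝ) ^ β))
      ≤ ENNReal.ofReal (g (n + 1)) := by
    have hx : (1 : ℝ) ≤ ((n + 1 : ℕ) : ℝ) := by exact_mod_cast Nat.succ_pos n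
    set x : ℝ := ((n + 1 : ℕ) : ℝ)
    have h₀ : 1 ≤ x ^ β₀ := one_le_rpow hx hβ₀.le
    have h₁ : x ^ β₀ ≤ x ^ β := rpow_le_rpow_of_exponent_le hx hβ
    have hexp : ω ^ (c * x ^ β) ≤ ω ^ (c - c₀) * ω ^ (c₀ * x ^ β₀) := by
      rw [← rpow_add hω.1]
      exact rpow_le_rpow_of_exponent_ge hω.1 hω.2.le (by nlinarith)
    change _ ≤ ENNReal.ofReal (M * ω ^ (c - c₀) * ω ^ (c₀ * x ^ β₀))
    rw [mul_assoc, ENNReal.ofReal_mul (Nat.cast_nonneg _), ENNReal.ofReal_natCast]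
    gcongr
    exact_mod_cast hM _
  have hgs : Summable g := (summable_rpow_mul_natCast_rpow hω hc₀ hβ₀).mul_left _
  rw [zetaFactor_eq_one_add (hβ₀.trans_le hβ).ne' hm0, ← tsum_mul_left,
    ENNReal.ofReal_tsum_of_nonneg hg0 hgs,
    tsum_eq_zero_add' (f := fun n => ENNReal.ofReal (g n)) ENNReal.summable]
  gcongr
  exact (ENNReal.tsum_le_tsum hterm).trans le_add_self

lemma summable_rpow_mul_of_tendsto_div_log {ω τ α : ℝ} {a : ℕ → ℝ} (hω : ω ∈ Set.Ioo 0 1)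
    (hα : Tendsto (fun j : ℕ => a j / log j) atTop (nhds α)) (hα0 : 0 < α)
    (hτ : (α * log ω⁻¹)⁻¹ < τ) : Summable fun j : ℕ => ω ^ (τ * a j) := by
  have hL : 0 < log ω⁻¹ := log_inv_pos_of_mem_Ioo hω
  have hτL : 0 < τ * log ω⁻¹ := mul_pos ((inv_pos.2 (mul_pos hα0 hL)).trans hτ) hL
  have h1 : 1 < τ * log ω⁻¹ * α := by
    rw [inv_lt_iff_one_lt_mul₀ (mul_pos hα0 hL)] at hτ
    linarith
  obtain ⟨θ, hθ1, hθα⟩ := exists_between h1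
  have hθ : θ / (τ * log ω⁻¹) < α := by
    rw [div_lt_iff₀ hτL]
    linarith [mul_comm α (τ * log ω⁻¹)]
  refine .of_norm_bounded_eventually_nat (g := fun j : ℕ => (j : ℝ) ^ (-θ))
    (summable_nat_rpow.2 (by linarith)) ?_
  filter_upwards [eventually_mul_log_lt_of_tendsto_div_log hα hθ, eventually_ge_atTop 1]
    with j hj hj1
  rw [norm_of_nonneg (rpow_nonneg hω.1.le _)]
  refine rpow_le_rpow_neg_of_mul_log_le hω.1 (by exact_mod_cast hj1) ?_
  rw [div_mul_eq_mul_div, div_lt_iff₀ hτL] at hj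
  linarith

lemma iSup_zetaSum_lt_top {ω τ b₀ : ℝ} {a b : ℕ → ℝ} {m : ℕ → ℕ} {M : ℕ}
    (hω : ω ∈ Set.Ioo 0 1) (hτ : 0 < τ) (ha0 : 0 < a 0) (hamono : Monotone a)
    (hb₀ : 0 < b₀) (hb : ∀ j, b₀ ≤ b j) (hM : ∀ k, m k ≤ M) (hm0 : m 0 = 1)
    (hsum : Summable fun j : ℕ => ω ^ (τ * a j)) :
    ⨆ s : ℕ, zetaSum ω a b m τ s < ⊤ := by
  set S := ∑' n : ℕ, ω ^ (τ * a 0 * (n : ℝ) ^ b₀)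
  set x : ℕ → ℝ := fun j => M * ω ^ (τ * a j - τ * a 0) * S
  have hx0 (j : ℕ) : 0 ≤ x j :=
    mul_nonneg (mul_nonneg M.cast_nonneg (rpow_nonneg hω.1.le _))
      (tsum_nonneg fun n => rpow_nonneg hω.1.le _)
  have hxs : Summable x :=
    (((hsum.div_const (ω ^ (τ * a 0))).congr fun j => (rpow_sub hω.1 _ _).symm).mul_left
      (M : ℝ)).mul_right S
  refine (iSup_le fun s => ?_ : _ ≤ ENNReal.ofReal (exp (∑' j, x j))).trans_lt
    ENNReal.ofReal_lt_top
  calc zetaSum ω a b m τ s = ∏ j : Fin s, zetaFactor ω m (τ * a j) (b j) :=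
        zetaSum_eq_prod_zetaFactor ω a b m τ s
    _ ≤ ∏ j : Fin s, (1 + ENNReal.ofReal (x j)) := Finset.prod_le_prod' fun j _ =>
        zetaFactor_le hω (mul_pos hτ ha0)
          (mul_le_mul_of_nonneg_left (hamono j.val.zero_le) hτ.le) hb₀ (hb j) hM hm0
    _ ≤ _ := prod_one_add_ofReal_le_exp_tsum hx0 hxs s

lemma eventually_rpow_neg_half_le_of_tendsto_div_log {ω τ : ℝ} {a : ℕ → ℝ}
    (hω : ω ∈ Set.Ioo 0 1) (hτ : 0 < τ)
    (hα : Tendsto (fun j : ℕ => a j / log j) atTop (nhds 0)) :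
    ∀ᶠ s : ℕ in atTop, ((s : ℝ) + 1) ^ (-(1 / 2 : ℝ)) ≤ ω ^ (τ * a s) := by
  have hτL : 0 < τ * log ω⁻¹ := mul_pos hτ (log_inv_pos_of_mem_Ioo hω)
  filter_upwards [eventually_lt_mul_log_of_tendsto_div_log hα
      (div_pos one_half_pos hτL), eventually_ge_atTop 1] with s hs hs1
  have hs1' : (1 : ℝ) ≤ s := by exact_mod_cast hs1
  refine rpow_neg_le_rpow_of_mul_log_le hω.1 (by positivity) ?_
  rw [div_mul_eq_mul_div, lt_div_iff₀ hτL] at hs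
  have := log_le_log (by positivity) (le_add_of_nonneg_right zero_le_one : (s : ℝ) ≤ s + 1)
  nlinarith [log_nonneg hs1']

lemma exp_le_one_add_pow_rpow_div_rpow {n : ℕ} {r p q : ℝ} (hn : 0 < n) (hp : 0 ≤ p)
    (hr : (n : ℝ) ^ (-(1 / 2 : ℝ)) ≤ r) (hr1 : r ≤ 1) :
    exp (p / 2 * (n : ℝ) ^ (1 / 2 : ℝ) - q * log n) ≤ ((1 + r) ^ n) ^ p / (n : ℝ) ^ q := by
  have hn' : (0 : ℝ) < n := by exact_mod_cast hn
  have hr0 : 0 < r := (rpow_pos_of_pos hn' _).trans_le hr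
  have hlog : r / 2 ≤ log (1 + r) :=
    le_trans (by rw [le_div_iff₀ (by linarith)]; nlinarith) (le_log_one_add_of_nonneg hr0.le)
  have hsqrt : (n : ℝ) ^ (1 / 2 : ℝ) ≤ n * r := by
    calc (n : ℝ) ^ (1 / 2 : ℝ) = n * (n : ℝ) ^ (-(1 / 2 : ℝ)) := by
          rw [← rpow_one_add' hn'.le (by norm_num)]; norm_num
      _ ≤ n * r := by gcongr
  rw [rpow_def_of_pos (pow_pos (by linarith) n), rpow_def_of_pos hn' q, log_pow, ← exp_sub,
    exp_le_exp]
  have := mul_le_mul_of_nonneg_left (hsqrt.trans (mul_le_mul_of_nonneg_left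
    (by linarith : r ≤ 2 * log (1 + r)) hn'.le)) hp
  linarith

lemma tendsto_one_add_pow_rpow_div_rpow_atTop {r : ℕ → ℝ} {p q : ℝ} (hp : 0 < p)
    (hr1 : ∀ s, r s ≤ 1) (hr : ∀ᶠ s : ℕ in atTop, ((s : ℝ) + 1) ^ (-(1 / 2 : ℝ)) ≤ r s) :
    Tendsto (fun s : ℕ => ((1 + r s) ^ (s + 1)) ^ p / ((s : ℝ) + 1) ^ q) atTop atTop := by
  have hsqrt : Tendsto (fun x : ℝ => p / 4 * x ^ (1 / 2 : ℝ)) atTop atTop :=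
    (tendsto_rpow_atTop (by norm_num)).const_mul_atTop (by positivity)
  have hexp : Tendsto (fun x : ℝ => exp (p / 2 * x ^ (1 / 2 : ℝ) - q * log x)) atTop atTop := by
    refine tendsto_exp_atTop.comp (tendsto_atTop_mono' _ ?_ hsqrt)
    filter_upwards [eventually_const_mul_log_le_mul_rpow q (by positivity : 0 < p / 4)
      (by norm_num : (0 : ℝ) < 1 / 2)] with x hx
    linarith
  refine tendsto_atTop_mono' _ ?_
    (hexp.comp (tendsto_atTop_add_const_right _ 1 tendsto_natCast_atTop_atTop))
  filter_upwards [hr] with s hs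
  simpa using exp_le_one_add_pow_rpow_div_rpow (n := s + 1) (q := q) s.succ_pos hp.le
    (by simpa using hs) (hr1 s)

lemma iSup_zetaSum_rpow_div_eq_top {ω τ q : ℝ} {a b : ℕ → ℝ} {m : ℕ → ℕ}
    (hω : ω ∈ Set.Ioo 0 1) (hτ : 0 < τ) (ha : ∀ j, 0 ≤ a j) (hamono : Monotone a)
    (hb : ∀ j, b j ≠ 0) (hm0 : m 0 = 1) (hm1 : 1 ≤ m 1)
    (hslow : ∀ᶠ s : ℕ in atTop, ((s : ℝ) + 1) ^ (-(1 / 2 : ℝ)) ≤ ω ^ (τ * a s)) :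
    ⨆ s : ℕ, zetaSum ω a b m τ (s + 1) ^ (1 / τ) / ((s : ℝ≥0∞) + 1) ^ q = ⊤ := by
  set r : ℕ → ℝ := fun s => ω ^ (τ * a s)
  have hr0 (s : ℕ) : 0 ≤ r s := rpow_nonneg hω.1.le _
  have hr1 (s : ℕ) : r s ≤ 1 := rpow_le_one hω.1.le hω.2.le (mul_nonneg hτ.le (ha s))
  have hprod (s : ℕ) : ENNReal.ofReal ((1 + r s) ^ (s + 1)) ≤ zetaSum ω a b m τ (s + 1) := by
    rw [zetaSum_eq_prod_zetaFactor, ENNReal.ofReal_pow (by linarith [hr0 s]),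
      ENNReal.ofReal_add zero_le_one (hr0 s), ENNReal.ofReal_one]
    calc (1 + ENNReal.ofReal (r s)) ^ (s + 1)
        = (1 + ENNReal.ofReal (r s)) ^ (Finset.univ : Finset (Fin (s + 1))).card := by simp
      _ ≤ _ := Finset.pow_card_le_prod _ _ _ fun j _ => ?_
    refine le_trans ?_ (one_add_le_zetaFactor (hb j) hm0 hm1)
    gcongr
    exact rpow_le_rpow_of_exponent_ge hω.1 hω.2.le
      (mul_le_mul_of_nonneg_left (hamono (Nat.lt_succ_iff.1 j.2)) hτ.le)
  have hlow (s : ℕ) : ENNReal.ofReal (((1 + r s) ^ (s + 1)) ^ (1 / τ) / ((s : ℝ) + 1) ^ q)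
      ≤ zetaSum ω a b m τ (s + 1) ^ (1 / τ) / ((s : ℝ≥0∞) + 1) ^ q := by
    rw [ENNReal.ofReal_div_of_pos (by positivity),
      ← ENNReal.ofReal_rpow_of_pos (by have := hr0 s; positivity),
      ← ENNReal.ofReal_rpow_of_pos (by positivity), ENNReal.ofReal_add (by positivity) zero_le_one,
      ENNReal.ofReal_natCast, ENNReal.ofReal_one]
    gcongr
    exact hprod s
  refine top_le_iff.1 (le_of_tendsto' (ENNReal.tendsto_ofReal_atTop.comp
    (tendsto_one_add_pow_rpow_div_rpow_atTop (one_div_pos.2 hτ) hr1 hslow))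
    fun s => (hlow s).trans (le_iSup_of_le s le_rfl))

/-- Strong polynomial tractability criterion: assume `m_0 = 1` and
`α = lim_j a_j / log j` exists. If `α > 0` then for every `τ > 1/(α log ω⁻¹)`,
`sup_s ∑_k λ_{s,k}^τ < ∞`; if `α = 0` then for every `τ > 0` and `q ≥ 0`,
`sup_s (∑_k λ_{s,k}^τ)^{1/τ} s^{-q} = ∞`. -/
theorem stmt19 (ω : ℝ) (hω : ω ∈ Set.Ioo (0:ℝ) 1)
    (a b : ℕ → ℝ) (ha : ∀ j, 0 < a j) (hamono : Monotone a)
    (b₀ : ℝ) (hb₀ : 0 < b₀) (hb : ∀ j, b₀ ≤ b j)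
    (m : ℕ → ℕ) (hm : ∀ k, 1 ≤ m k) (hmbd : ∃ M, ∀ k, m k ≤ M) (hm0 : m 0 = 1)
    (α : ℝ)
    (hα : Filter.Tendsto (fun j : ℕ => a j / Real.log (j : ℝ)) Filter.atTop (nhds α)) :
    (0 < α → ∀ τ : ℝ, (α * Real.log ω⁻¹)⁻¹ < τ →
      (⨆ s : ℕ, zetaSum ω a b m τ s) < ⊤) ∧
    (α = 0 → ∀ τ q : ℝ, 0 < τ → 0 ≤ q →
      (⨆ s : ℕ, (zetaSum ω a b m τ (s + 1)) ^ (1 / τ) / (((s : ℝ≥0∞) + 1) ^ q)) = ⊤) := by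
  obtain ⟨M, hM⟩ := hmbd
  refine ⟨fun hα0 τ hτ => ?_, fun hα0 τ q hτ _ => ?_⟩
  · have hτ0 : 0 < τ :=
      (inv_pos.2 (mul_pos hα0 (log_inv_pos_of_mem_Ioo hω))).trans hτ
    exact iSup_zetaSum_lt_top hω hτ0 (ha 0) hamono hb₀ hb hM hm0
      (summable_rpow_mul_of_tendsto_div_log hω hα hα0 hτ)
  · rw [hα0] at hα
    exact iSup_zetaSum_rpow_div_eq_top hω hτ (fun j => (ha j).le) hamono
      (fun j => (hb₀.trans_le (hb j)).ne') hm0 (hm 1)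
      (eventually_rpow_neg_half_le_of_tendsto_div_log hω hτ hα)
end
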